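/- Let C(c) = Σᵢ₌₀^∞ bᵢcⁱ with bᵢ ≥ 0, Σᵢ bᵢ = 1, and b₀ = 0 (i.e., C(0) = 0 and C(1) = 1). Then max over c ∈ [−1,1] of |C(c) − c| ≤ 2(C'(1) − 1) and max over c ∈ [−1,1] of |C'(c) − 1| ≤ 3(C'(1) − 1). -/

import Mathlib

/-!
Since `∑ bᵢ = 1`, both deviations are series with weights `bᵢ`:
`C c - c = ∑ bᵢ (cⁱ - c)` and `C' c - 1 = ∑ bᵢ (i cⁱ⁻¹ - 1)`, while `C'(1) - 1 = ∑ (i - 1) bᵢ`.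
On `[-1, 1]` the term `i = 1` vanishes in both, and for `i ≥ 2` we have `|cⁱ - c| ≤ 2 ≤ 2 (i - 1)`
and `|i cⁱ⁻¹ - 1| ≤ i + 1 ≤ 3 (i - 1)`; the term `i = 0` is killed by `b₀ = 0`.
-/

lemma abs_pow_sub_self_le {c : ℝ} (hc : |c| ≤ 1) {i : ℕ} (hi : 1 ≤ i) :
    |c ^ i - c| ≤ 2 * ((i : ℝ) - 1) := by
  obtain rfl | hi₂ := hi.eq_or_lt
  · simp
  have hci : |c ^ i| ≤ 1 := by rw [abs_pow]; exact pow_le_one₀ (abs_nonneg c) hc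
  have hi₂' : (2 : ℝ) ≤ i := by exact_mod_cast hi₂
  calc |c ^ i - c| ≤ |c ^ i| + |c| := abs_sub _ _
    _ ≤ 2 * ((i : ℝ) - 1) := by linarith

lemma abs_natCast_mul_pow_pred_sub_one_le {c : ℝ} (hc : |c| ≤ 1) {i : ℕ} (hi : 1 ≤ i) :
    |(i : ℝ) * c ^ (i - 1) - 1| ≤ 3 * ((i : ℝ) - 1) := by
  obtain rfl | hi₂ := hi.eq_or_lt
  · simp
  have hci : |c ^ (i - 1)| ≤ 1 := by rw [abs_pow]; exact pow_le_one₀ (abs_nonneg c) hc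
  have hi₂' : (2 : ℝ) ≤ i := by exact_mod_cast hi₂
  calc |(i : ℝ) * c ^ (i - 1) - 1| ≤ |(i : ℝ) * c ^ (i - 1)| + |1| := abs_sub _ _
    _ = i * |c ^ (i - 1)| + 1 := by rw [abs_mul, Nat.abs_cast, abs_one]
    _ ≤ i * 1 + 1 := by gcongr
    _ ≤ 3 * ((i : ℝ) - 1) := by linarith

lemma abs_le_of_hasSum_weighted {b f : ℕ → ℝ} {S T k : ℝ} (hb : ∀ i, 0 ≤ b i) (hb0 : b 0 = 0)
    (hS : HasSum (fun i => b i * f i) S) (hT : HasSum (fun i : ℕ => ((i : ℝ) - 1) * b i) T)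
    (hf : ∀ i, 1 ≤ i → |f i| ≤ k * ((i : ℝ) - 1)) : |S| ≤ k * T := by
  refine hS.norm_le_of_bounded (hT.mul_left k) fun i => ?_
  rcases Nat.eq_zero_or_pos i with rfl | hi
  · simp [hb0]
  · calc ‖b i * f i‖ = b i * |f i| := by rw [Real.norm_eq_abs, abs_mul, abs_of_nonneg (hb i)]
      _ ≤ b i * (k * ((i : ℝ) - 1)) := mul_le_mul_of_nonneg_left (hf i hi) (hb i)
      _ = k * (((i : ℝ) - 1) * b i) := by ring

theorem deviation_bound_zero_at_zero (b : ℕ → ℝ) (hb : ∀ i, 0 ≤ b i)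
    (hsum : HasSum b 1) (hb0 : b 0 = 0)
    (C D : ℝ → ℝ)
    (hC : ∀ c ∈ Set.Icc (-1:ℝ) 1, HasSum (fun i => b i * c ^ i) (C c))
    (hD : ∀ c ∈ Set.Icc (-1:ℝ) 1, HasSum (fun i : ℕ => (i : ℝ) * b i * c ^ (i - 1)) (D c)) :
    (∀ c ∈ Set.Icc (-1:ℝ) 1, |C c - c| ≤ 2 * (D 1 - 1)) ∧
    (∀ c ∈ Set.Icc (-1:ℝ) 1, |D c - 1| ≤ 3 * (D 1 - 1)) := by
  have hD1 : HasSum (fun i : ℕ => ((i : ℝ) - 1) * b i) (D 1 - 1) := by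
    simpa only [one_pow, mul_one, sub_one_mul] using (hD 1 (by norm_num)).sub hsum
  constructor
  · intro c hc
    have hCc : HasSum (fun i => b i * (c ^ i - c)) (C c - c) := by
      simpa only [mul_sub, one_mul] using (hC c hc).sub (hsum.mul_right c)
    exact abs_le_of_hasSum_weighted hb hb0 hCc hD1 fun i hi =>
      abs_pow_sub_self_le (abs_le.mpr hc) hi
  · intro c hc
    have hDc : HasSum (fun i => b i * ((i : ℝ) * c ^ (i - 1) - 1)) (D c - 1) :=
      ((hD c hc).sub hsum).congr_fun fun i => by ring
    exact abs_le_of_hasSum_weighted hb hb0 hDc hD1 fun i hi =>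
      abs_natCast_mul_pow_pred_sub_one_le (abs_le.mpr hc) hi
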